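/- arXiv:2209.01609 — 7 statements merged into one kernel-verified Lean document; each statement's English description precedes it below -/
import Mathlib

section
/- Let n ≥ 2 and m be integers with 0 < m < n and gcd(m, n) = 1, and let ρ₁ : ℝ → ℝ be a continuous 2π-periodic function. If there exists k ∈ ℤ with k ≠ 0, n ∣ k, and the k-th Fourier coefficient of ρ₁ nonzero, then the function θ ↦ ∑_{j=0}^{n-1} ρ₁(θ + 2πmj/n) is not constant on ℝ. -/
/-!
The `k`-th Fourier coefficient of the translate `θ ↦ g (θ + a)` is `e^{ika} ĝ(k)`. For the
shifts `a = 2πmj/n` and `n ∣ k` all these phases are `1`, so the `k`-th coefficient of the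
subharmonic sum is `n ĝ(k)`. A constant has vanishing coefficients at `k ≠ 0`, hence the sum
can only be constant when `ĝ(k) = 0`.
-/

/-- The `k`-th Fourier coefficient (with respect to period `2π`) of a function
`g : ℝ → ℂ`, namely `(1/2π) ∫_0^{2π} g(θ) e^{-ikθ} dθ`. -/
noncomputable def fourierCoeff2pi (g : ℝ → ℂ) (k : ℤ) : ℂ :=
  (1 / (2 * (Real.pi : ℂ))) *
    ∫ θ in (0 : ℝ)..(2 * Real.pi), g θ * Complex.exp (-Complex.I * (k : ℂ) * (θ : ℂ))

open Complex
open scoped Real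

theorem exp_neg_I_mul_int_mul_two_pi (k : ℤ) : exp (-I * k * (2 * π)) = 1 := by
  rw [← exp_int_mul_two_pi_mul_I (-k)]
  push_cast
  ring_nf

theorem periodic_exp_neg_I_mul_int (k : ℤ) :
    Function.Periodic (fun θ : ℝ => exp (-I * k * θ)) (2 * π) := fun θ => by
  simp only [ofReal_add, ofReal_mul, ofReal_ofNat, mul_add, exp_add, exp_neg_I_mul_int_mul_two_pi,
    mul_one]

theorem exp_I_mul_int_mul_two_pi_mul_div_of_dvd {n : ℕ} {k : ℤ} (hk : (n : ℤ) ∣ k) (m : ℤ)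
    (j : ℕ) :
    exp (I * k * ↑(2 * π * m * j / n)) = 1 := by
  obtain ⟨d, rfl⟩ := hk
  rcases eq_or_ne n 0 with rfl | hn
  · simp
  rw [← exp_int_mul_two_pi_mul_I (d * m * j)]
  push_cast
  field_simp

namespace fourierCoeff2pi

theorem comp_add_right {g : ℝ → ℂ} (hg : Function.Periodic g (2 * π)) (a : ℝ) (k : ℤ) :
    fourierCoeff2pi (fun θ => g (θ + a)) k = exp (I * k * a) * fourierCoeff2pi g k := by
  set F : ℝ → ℂ := fun θ => g θ * exp (-I * k * θ)
  have hF : Function.Periodic F (2 * π) := hg.mul (periodic_exp_neg_I_mul_int k)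
  have htranslate :
      ∀ θ : ℝ, g (θ + a) * exp (-I * k * θ) = exp (I * k * a) * F (θ + a) := by
    intro θ
    rw [mul_left_comm, ← exp_add]
    push_cast
    ring_nf
  have hperiod : ∫ θ in (0 : ℝ)..2 * π, F (θ + a) = ∫ θ in (0 : ℝ)..2 * π, F θ := by
    rw [intervalIntegral.integral_comp_add_right, zero_add, add_comm,
      hF.intervalIntegral_add_eq a 0, zero_add]
  simp only [fourierCoeff2pi, htranslate, intervalIntegral.integral_const_mul]
  rw [hperiod]
  ring

theorem sum {ι : Type*} (s : Finset ι) {g : ι → ℝ → ℂ}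
    (hg : ∀ i ∈ s, IntervalIntegrable (g i) MeasureTheory.volume 0 (2 * π)) (k : ℤ) :
    fourierCoeff2pi (fun θ => ∑ i ∈ s, g i θ) k = ∑ i ∈ s, fourierCoeff2pi (g i) k := by
  simp only [fourierCoeff2pi, ← Finset.mul_sum, Finset.sum_mul]
  rw [intervalIntegral.integral_finsetSum fun i hi =>
    (hg i hi).mul_continuousOn (by fun_prop)]

theorem const (c : ℂ) {k : ℤ} (hk : k ≠ 0) : fourierCoeff2pi (fun _ => c) k = 0 := by
  have hkI : -I * k ≠ 0 := by simpa using hk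
  simp only [fourierCoeff2pi, intervalIntegral.integral_const_mul, integral_exp_mul_complex hkI,
    ofReal_mul, ofReal_ofNat, ofReal_zero, mul_zero, exp_zero, exp_neg_I_mul_int_mul_two_pi,
    sub_self, zero_div]

theorem sum_comp_add_rotation {g : ℝ → ℂ} (hg : Continuous g)
    (hper : Function.Periodic g (2 * π)) {n : ℕ} {k : ℤ} (hk : (n : ℤ) ∣ k) (m : ℤ) :
    fourierCoeff2pi (fun θ => ∑ j ∈ Finset.range n, g (θ + 2 * π * m * j / n)) k =
      n * fourierCoeff2pi g k := by
  rw [sum (g := fun (j : ℕ) θ => g (θ + 2 * π * m * j / n)) _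
    fun j _ => (hg.comp (continuous_add_const _)).intervalIntegrable _ _]
  simp only [comp_add_right hper, exp_I_mul_int_mul_two_pi_mul_div_of_dvd hk, one_mul,
    Finset.sum_const, Finset.card_range, nsmul_eq_mul]

end fourierCoeff2pi

theorem subharmonic_average_not_constant_general (n : ℕ) (m : ℤ)
    (ρ₁ : ℝ → ℝ) (hc : Continuous ρ₁) (hper : Function.Periodic ρ₁ (2 * Real.pi))
    (h : ∃ k : ℤ, k ≠ 0 ∧ (n : ℤ) ∣ k ∧
      fourierCoeff2pi (fun θ => ((ρ₁ θ : ℝ) : ℂ)) k ≠ 0) :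
    ¬ ∃ c : ℝ, ∀ θ : ℝ,
        ∑ j ∈ Finset.range n, ρ₁ (θ + 2 * Real.pi * m * j / n) = c := by
  rintro ⟨c, hconst⟩
  obtain ⟨k, hk0, hnk, hcoeff⟩ := h
  have hn : (n : ℂ) ≠ 0 := Nat.cast_ne_zero.mpr <| by
    rintro rfl
    exact hk0 (zero_dvd_iff.mp (by exact_mod_cast hnk))
  have hsum :=
    fourierCoeff2pi.sum_comp_add_rotation (continuous_ofReal.comp hc) (hper.comp _) hnk m
  have hsum_const :
      (fun θ : ℝ => ∑ j ∈ Finset.range n, (ρ₁ (θ + 2 * π * m * j / n) : ℂ)) = fun _ => (c : ℂ) :=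
    funext fun θ => by exact_mod_cast congrArg ofReal (hconst θ)
  simp only [Function.comp_apply, hsum_const, fourierCoeff2pi.const _ hk0] at hsum
  exact hcoeff ((mul_eq_zero.mp hsum.symm).resolve_left hn)

/-- If `ρ₁` is continuous and `2π`-periodic and has a nonzero Fourier coefficient at some
nonzero frequency `k` divisible by `n`, then the subharmonic average
`θ ↦ ∑_{j=0}^{n-1} ρ₁(θ + 2πmj/n)` is not constant. -/
theorem subharmonic_average_not_constant (n : ℕ) (hn : 2 ≤ n) (m : ℤ)
    (hm : 0 < m) (hmn : m < (n : ℤ)) (hgcd : Int.gcd m (n : ℤ) = 1)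
    (ρ₁ : ℝ → ℝ) (hc : Continuous ρ₁) (hper : Function.Periodic ρ₁ (2 * Real.pi))
    (h : ∃ k : ℤ, k ≠ 0 ∧ (n : ℤ) ∣ k ∧
      fourierCoeff2pi (fun θ => ((ρ₁ θ : ℝ) : ℂ)) k ≠ 0) :
    ¬ ∃ c : ℝ, ∀ θ : ℝ,
        ∑ j ∈ Finset.range n, ρ₁ (θ + 2 * Real.pi * m * j / n) = c :=
  subharmonic_average_not_constant_general n m ρ₁ hc hper h
end

section
/- Let ρ₀ ∈ (0, π/2), a, b ∈ ℝ, and Δ ∈ ℝ with sin(Δ/2) ≠ 0. Define D : ℝ → ℝ by D(ε) = arccos( sin(ρ₀+εa)·sin(ρ₀+εb)·cos Δ + cos(ρ₀+εa)·cos(ρ₀+εb) ). Then D is differentiable at ε = 0 with derivative D′(0) = sin(2ρ₀)·(a+b)·sin²(Δ/2) / sin l₀, where l₀ = arccos(1 − 2 sin²ρ₀ sin²(Δ/2)). -/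
open Real

/-! The integrand is the spherical law of cosines `c(ε) = cos D(ε)`. At `ε = 0` the half-angle
formula gives `c(0) = 1 - 2 sin²ρ₀ sin²(Δ/2) = cos l₀`, which lies strictly between `-1` and `1`
as soon as `sin ρ₀`, `cos ρ₀` and `sin (Δ/2)` are nonzero, so `arccos` is differentiable there with
derivative `-1 / sin l₀`; the product rule gives `c'(0) = -sin(2ρ₀)(a+b)sin²(Δ/2)`. -/

theorem cos_eq_one_sub_two_mul_sin_half_sq (x : ℝ) : cos x = 1 - 2 * sin (x / 2) ^ 2 := by
  have h := cos_two_mul' (x / 2)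
  rw [mul_div_cancel₀ x two_ne_zero] at h
  nlinarith [sin_sq_add_cos_sq (x / 2)]

theorem HasDerivAt.arccos_of_eq {f : ℝ → ℝ} {f' x y : ℝ} (hf : HasDerivAt f f' x)
    (hfx : f x = y) (hy : y ∈ Set.Ioo (-1) 1) :
    HasDerivAt (fun t => arccos (f t)) (-f' / Real.sin (arccos y)) x := by
  subst hfx
  have h := (hasDerivAt_arccos hy.1.ne' hy.2.ne).comp x hf
  rw [sin_arccos]
  exact h.congr_deriv (by ring)

theorem sin_mul_sin_mul_cos_add_cos_mul_cos_self (ρ Δ : ℝ) :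
    sin ρ * sin ρ * cos Δ + cos ρ * cos ρ = 1 - 2 * sin ρ ^ 2 * sin (Δ / 2) ^ 2 := by
  rw [cos_eq_one_sub_two_mul_sin_half_sq Δ]
  nlinarith [sin_sq_add_cos_sq ρ]

theorem one_sub_two_mul_sin_sq_mul_sin_half_sq_mem_Ioo {ρ Δ : ℝ} (hsin : sin ρ ≠ 0)
    (hcos : cos ρ ≠ 0) (hΔ : sin (Δ / 2) ≠ 0) :
    1 - 2 * sin ρ ^ 2 * sin (Δ / 2) ^ 2 ∈ Set.Ioo (-1) 1 := by
  have hρ_pos : 0 < sin ρ ^ 2 := by positivity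
  have hρ_lt : sin ρ ^ 2 < 1 := by
    have : 0 < cos ρ ^ 2 := by positivity
    linarith [sin_sq_add_cos_sq ρ]
  have hΔ_pos : 0 < sin (Δ / 2) ^ 2 := by positivity
  have hΔ_le : sin (Δ / 2) ^ 2 ≤ 1 := by nlinarith [sin_sq_add_cos_sq (Δ / 2)]
  constructor <;> nlinarith [mul_pos hρ_pos hΔ_pos]

theorem hasDerivAt_sin_mul_sin_mul_cos_add_cos_mul_cos (ρ a b Δ : ℝ) :
    HasDerivAt
      (fun ε : ℝ => sin (ρ + ε * a) * sin (ρ + ε * b) * cos Δ +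
        cos (ρ + ε * a) * cos (ρ + ε * b))
      (-(sin (2 * ρ) * (a + b) * sin (Δ / 2) ^ 2)) 0 := by
  have hlin (c : ℝ) : HasDerivAt (fun ε : ℝ => ρ + ε * c) c 0 := by
    simpa using ((hasDerivAt_id (0 : ℝ)).mul_const c).const_add ρ
  have h := ((((hlin a).sin.mul (hlin b).sin).mul_const (cos Δ)).add
    ((hlin a).cos.mul (hlin b).cos))
  refine h.congr_deriv ?_
  simp only [zero_mul, add_zero]
  rw [sin_two_mul, cos_eq_one_sub_two_mul_sin_half_sq Δ]
  ring

/-- **First-order variation of spherical chord length.** For `ρ₀ ∈ (0, π/2)`, `a, b ∈ ℝ`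
and `Δ` with `sin(Δ/2) ≠ 0`, the function
`D(ε) = arccos(sin(ρ₀+εa) sin(ρ₀+εb) cos Δ + cos(ρ₀+εa) cos(ρ₀+εb))`
is differentiable at `ε = 0` with derivative
`sin(2ρ₀)(a+b)sin²(Δ/2)/sin l₀`, where `l₀ = arccos(1 − 2 sin²ρ₀ sin²(Δ/2))`. -/
theorem spherical_chord_variation (ρ₀ : ℝ) (hρ : ρ₀ ∈ Set.Ioo 0 (π / 2))
    (a b Δ : ℝ) (hΔ : sin (Δ / 2) ≠ 0) :
    HasDerivAt
      (fun ε : ℝ => arccos (sin (ρ₀ + ε * a) * sin (ρ₀ + ε * b) * cos Δ +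
        cos (ρ₀ + ε * a) * cos (ρ₀ + ε * b)))
      (sin (2 * ρ₀) * (a + b) * sin (Δ / 2) ^ 2 /
        sin (arccos (1 - 2 * sin ρ₀ ^ 2 * sin (Δ / 2) ^ 2)))
      0 := by
  obtain ⟨h0, h1⟩ := hρ
  have hsin : sin ρ₀ ≠ 0 := (sin_pos_of_pos_of_lt_pi h0 (by linarith [pi_pos])).ne'
  have hcos : cos ρ₀ ≠ 0 := (cos_pos_of_mem_Ioo ⟨by linarith [pi_pos], h1⟩).ne'
  have hvalue : sin (ρ₀ + 0 * a) * sin (ρ₀ + 0 * b) * cos Δ +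
      cos (ρ₀ + 0 * a) * cos (ρ₀ + 0 * b) = 1 - 2 * sin ρ₀ ^ 2 * sin (Δ / 2) ^ 2 := by
    simpa only [zero_mul, add_zero] using sin_mul_sin_mul_cos_add_cos_mul_cos_self ρ₀ Δ
  simpa only [neg_neg] using (hasDerivAt_sin_mul_sin_mul_cos_add_cos_mul_cos ρ₀ a b Δ).arccos_of_eq
    hvalue (one_sub_two_mul_sin_sq_mul_sin_half_sq_mem_Ioo hsin hcos hΔ)
end

section
/- Let ρ₀ > 0, a, b ∈ ℝ, and Δ ∈ ℝ with sin(Δ/2) ≠ 0. Define D : ℝ → ℝ by D(ε) = arcosh( cosh(ρ₀+εa)·cosh(ρ₀+εb) − sinh(ρ₀+εa)·sinh(ρ₀+εb)·cos Δ ). Then D is differentiable at ε = 0 with derivative D′(0) = sinh(2ρ₀)·(a+b)·sin²(Δ/2) / sinh l₀, where l₀ = arcosh(1 + 2 sinh²ρ₀ sin²(Δ/2)). -/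
/-! At `ε = 0` the argument of `arcosh` is `cosh l₀ = 1 + 2 sinh²ρ₀ sin²(Δ/2) > 1`, where
`arcosh` is differentiable with derivative `1 / sinh l₀`; the chain rule then reduces the claim
to differentiating the hyperbolic law of cosines along the radial perturbation. -/

open Real

noncomputable def arcosh (x : ℝ) : ℝ := Real.log (x + Real.sqrt (x ^ 2 - 1))

theorem arcosh_eq_real_arcosh : _root_.arcosh = Real.arcosh := rfl

/-- The hyperbolic law of cosines: the `cosh` of the distance between the points of `ℍ²` with
geodesic polar coordinates `(ρ₁, θ)` and `(ρ₂, θ + Δ)`. -/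
noncomputable def chordCosh (ρ₁ ρ₂ Δ : ℝ) : ℝ :=
  cosh ρ₁ * cosh ρ₂ - sinh ρ₁ * sinh ρ₂ * cos Δ

theorem one_sub_cos_eq_two_mul_sin_sq_half (Δ : ℝ) : 1 - cos Δ = 2 * sin (Δ / 2) ^ 2 := by
  rw [show Δ = 2 * (Δ / 2) by ring, cos_two_mul, cos_sq', mul_div_cancel_left₀ _ two_ne_zero]
  ring

theorem chordCosh_self (ρ Δ : ℝ) :
    chordCosh ρ ρ Δ = 1 + 2 * sinh ρ ^ 2 * sin (Δ / 2) ^ 2 := by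
  rw [chordCosh]
  linear_combination cosh_sq_sub_sinh_sq ρ + sinh ρ ^ 2 * one_sub_cos_eq_two_mul_sin_sq_half Δ

theorem hasDerivAt_chordCosh_radial (ρ a b Δ : ℝ) :
    HasDerivAt (fun ε : ℝ => chordCosh (ρ + ε * a) (ρ + ε * b) Δ)
      (sinh (2 * ρ) * (a + b) * sin (Δ / 2) ^ 2) 0 := by
  have hline (c : ℝ) : HasDerivAt (fun ε : ℝ => ρ + ε * c) c 0 := by
    simpa using ((hasDerivAt_id (0 : ℝ)).mul_const c).const_add ρ
  refine (((hline a).cosh.mul (hline b).cosh).sub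
    (((hline a).sinh.mul (hline b).sinh).mul_const (cos Δ))).congr_deriv ?_
  simp only [sinh_two_mul, zero_mul, add_zero]
  linear_combination cosh ρ * sinh ρ * (a + b) * one_sub_cos_eq_two_mul_sin_sq_half Δ

/-- **First-order variation of hyperbolic chord length.** For `ρ₀ > 0`, `a, b ∈ ℝ`
and `Δ` with `sin(Δ/2) ≠ 0`, the function
`D(ε) = arcosh(cosh(ρ₀+εa) cosh(ρ₀+εb) − sinh(ρ₀+εa) sinh(ρ₀+εb) cos Δ)`
is differentiable at `ε = 0` with derivative
`sinh(2ρ₀)(a+b)sin²(Δ/2)/sinh l₀`, where `l₀ = arcosh(1 + 2 sinh²ρ₀ sin²(Δ/2))`. -/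
theorem hyperbolic_chord_variation (ρ₀ : ℝ) (hρ : 0 < ρ₀)
    (a b Δ : ℝ) (hΔ : sin (Δ / 2) ≠ 0) :
    HasDerivAt
      (fun ε : ℝ => _root_.arcosh (cosh (ρ₀ + ε * a) * cosh (ρ₀ + ε * b) -
        sinh (ρ₀ + ε * a) * sinh (ρ₀ + ε * b) * cos Δ))
      (sinh (2 * ρ₀) * (a + b) * sin (Δ / 2) ^ 2 /
        sinh (_root_.arcosh (1 + 2 * sinh ρ₀ ^ 2 * sin (Δ / 2) ^ 2)))
      0 := by
  have hl₀ : 1 < 1 + 2 * sinh ρ₀ ^ 2 * sin (Δ / 2) ^ 2 :=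
    lt_add_of_pos_right 1 (by have := sinh_pos_iff.2 hρ; positivity)
  have hD := (Real.hasDerivAt_arcosh hl₀).comp_of_eq 0 (hasDerivAt_chordCosh_radial ρ₀ a b Δ)
    (by simp only [zero_mul, add_zero, chordCosh_self])
  rw [arcosh_eq_real_arcosh, Real.sinh_arcosh hl₀.le, div_eq_inv_mul]
  exact hD
end

section
/- Let ρ₀ ∈ (0, π/2), let n ≥ 2 and m be integers with 0 < m < n and gcd(m,n) = 1, let ρ₁ : ℝ → ℝ be 2π-periodic, and fix θ ∈ ℝ. Set θ_j = θ + 2πmj/n and define ℓ : ℝ → ℝ by ℓ(ε) = ∑_{j=0}^{n-1} arccos( sin(ρ₀+ερ₁(θ_j))·sin(ρ₀+ερ₁(θ_{j+1}))·cos(2πm/n) + cos(ρ₀+ερ₁(θ_j))·cos(ρ₀+ερ₁(θ_{j+1})) ). Then ℓ is differentiable at ε = 0 with derivative ℓ′(0) = ( 2 sin(2ρ₀) sin²(πm/n) / sin l₀ ) · ∑_{j=0}^{n-1} ρ₁(θ_j), where l₀ = arccos(1 − 2 sin²ρ₀ sin²(πm/n)). -/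
/-!
Each summand of `ℓ` is `arccos` of the inner product `⟨p, q⟩` of two consecutive impact points. At
`ε = 0` that inner product is `cos l₀ = 1 - 2 sin² ρ₀ sin² (π m / n)`, strictly between `-1` and `1`
because `sin ρ₀ ∈ (0, 1)` and `0 < m < n`, so `arccos` is differentiable there; the chain rule gives
the summand's derivative as `(ρ₁(θ_j) + ρ₁(θ_{j+1})) sin (2 ρ₀) sin² (π m / n) / sin l₀`. Periodicity
of `ρ₁` makes `j ↦ ρ₁(θ_j)` cyclic of period `n`, so both halves contribute `∑ ρ₁(θ_j)`.
-/

open Real Finset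

/-- Inner product in `ℝ³` of two points of `𝕊²` at polar distances `r₁`, `r₂` from the north pole
whose azimuths differ by `φ`. -/
noncomputable def sphericalCos (r₁ r₂ φ : ℝ) : ℝ :=
  sin r₁ * sin r₂ * cos φ + cos r₁ * cos r₂

theorem sphericalCos_self_two_mul (r ψ : ℝ) :
    sphericalCos r r (2 * ψ) = 1 - 2 * sin r ^ 2 * sin ψ ^ 2 := by
  rw [sphericalCos, cos_two_mul, cos_sq' ψ]
  linear_combination sin_sq_add_cos_sq r

theorem hasDerivAt_sphericalCos (r ψ a b : ℝ) :
    HasDerivAt (fun ε => sphericalCos (r + ε * a) (r + ε * b) (2 * ψ))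
      (-((a + b) * (sin (2 * r) * sin ψ ^ 2))) 0 := by
  have hline : ∀ c : ℝ, HasDerivAt (fun ε : ℝ => r + ε * c) c 0 := fun c => by
    simpa using ((hasDerivAt_id (0 : ℝ)).mul_const c).const_add r
  refine ((((hline a).sin.mul (hline b).sin).mul_const (cos (2 * ψ))).add
    ((hline a).cos.mul (hline b).cos)).congr_deriv ?_
  simp only [zero_mul, add_zero]
  rw [sin_two_mul, cos_two_mul, cos_sq' ψ]
  ring

theorem hasDerivAt_arccos_sphericalCos (r ψ a b : ℝ)
    (hc : 1 - 2 * sin r ^ 2 * sin ψ ^ 2 ∈ Set.Ioo (-1) 1) :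
    HasDerivAt (fun ε => arccos (sphericalCos (r + ε * a) (r + ε * b) (2 * ψ)))
      ((a + b) * (sin (2 * r) * sin ψ ^ 2 / sin (arccos (1 - 2 * sin r ^ 2 * sin ψ ^ 2)))) 0 := by
  have hc₀ : sphericalCos (r + 0 * a) (r + 0 * b) (2 * ψ) = 1 - 2 * sin r ^ 2 * sin ψ ^ 2 := by
    simp only [zero_mul, add_zero, sphericalCos_self_two_mul]
  have harccos := hasDerivAt_arccos (hc₀ ▸ hc.1.ne') (hc₀ ▸ hc.2.ne)
  refine (harccos.comp 0 (hasDerivAt_sphericalCos r ψ a b)).congr_deriv ?_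
  rw [hc₀, sin_arccos]
  field_simp

theorem one_sub_two_mul_sq_mul_sq_mem_Ioo {x y : ℝ} (hx₀ : x ≠ 0) (hx₁ : x ^ 2 < 1) (hy₀ : y ≠ 0)
    (hy₁ : y ^ 2 ≤ 1) : 1 - 2 * x ^ 2 * y ^ 2 ∈ Set.Ioo (-1) 1 := by
  have hpos : 0 < x ^ 2 * y ^ 2 := by positivity
  have hlt : x ^ 2 * y ^ 2 < 1 := by nlinarith
  constructor <;> linarith

theorem Finset.sum_range_succ_eq_of_eq {M : Type*} [AddCancelCommMonoid M] (g : ℕ → M) {n : ℕ}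
    (hg : g n = g 0) : ∑ j ∈ range n, g (j + 1) = ∑ j ∈ range n, g j := by
  have h := (sum_range_succ' g n).symm.trans (sum_range_succ g n)
  rwa [hg, add_left_inj] at h

theorem Function.Periodic.sum_range_rotation_succ {M : Type*} [AddCancelCommMonoid M]
    {f : ℝ → M} {T : ℝ} (hf : Function.Periodic f T) (θ : ℝ) (m : ℤ) {n : ℕ} (hn : n ≠ 0) :
    ∑ j ∈ range n, f (θ + T * m * ((j : ℝ) + 1) / n) = ∑ j ∈ range n, f (θ + T * m * j / n) := by
  have hclosed : f (θ + T * m * (n : ℕ) / n) = f (θ + T * m * (0 : ℕ) / n) := by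
    have hn' : (n : ℝ) ≠ 0 := Nat.cast_ne_zero.mpr hn
    rw [mul_div_cancel_right₀ _ hn', Nat.cast_zero, mul_zero, zero_div, add_zero, mul_comm]
    exact hf.int_mul m θ
  simpa only [Nat.cast_succ] using
    sum_range_succ_eq_of_eq (fun j : ℕ => f (θ + T * m * (j : ℝ) / n)) hclosed

theorem spherical_melnikov_derivative_general (ρ₀ : ℝ) (hρ : ρ₀ ∈ Set.Ioo 0 (π / 2))
    (n : ℕ) (m : ℤ) (hm : 0 < m) (hmn : m < (n : ℤ))
    (ρ₁ : ℝ → ℝ) (hper : Function.Periodic ρ₁ (2 * π)) (θ : ℝ) :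
    HasDerivAt
      (fun ε : ℝ => ∑ j ∈ Finset.range n,
        arccos (sin (ρ₀ + ε * ρ₁ (θ + 2 * π * m * j / n)) *
            sin (ρ₀ + ε * ρ₁ (θ + 2 * π * m * (j + 1) / n)) * cos (2 * π * m / n) +
          cos (ρ₀ + ε * ρ₁ (θ + 2 * π * m * j / n)) *
            cos (ρ₀ + ε * ρ₁ (θ + 2 * π * m * (j + 1) / n))))
      ((2 * sin (2 * ρ₀) * sin (π * m / n) ^ 2 /
          sin (arccos (1 - 2 * sin ρ₀ ^ 2 * sin (π * m / n) ^ 2))) *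
        ∑ j ∈ Finset.range n, ρ₁ (θ + 2 * π * m * j / n))
      0 := by
  have hn : n ≠ 0 := by omega
  have hm' : (0 : ℝ) < m := by exact_mod_cast hm
  have hmn' : (m : ℝ) < n := by exact_mod_cast hmn
  have hsinρ₀ : sin ρ₀ ≠ 0 := (sin_pos_of_pos_of_lt_pi hρ.1 (by linarith [hρ.2, pi_pos])).ne'
  have hsinρ₀_sq : sin ρ₀ ^ 2 < 1 := by
    nlinarith [sin_sq_add_cos_sq ρ₀, cos_pos_of_mem_Ioo ⟨by linarith [hρ.1, pi_pos], hρ.2⟩]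
  have hsin_angle : sin (π * m / n) ≠ 0 := by
    refine (sin_pos_of_pos_of_lt_pi (by positivity) ?_).ne'
    rw [div_lt_iff₀ (by positivity)]
    nlinarith [pi_pos]
  have hc := one_sub_two_mul_sq_mul_sq_mem_Ioo hsinρ₀ hsinρ₀_sq hsin_angle (sin_sq_le_one _)
  have hsum := HasDerivAt.fun_sum (u := range n) fun j _ =>
    hasDerivAt_arccos_sphericalCos ρ₀ (π * m / n) (ρ₁ (θ + 2 * π * m * j / n))
      (ρ₁ (θ + 2 * π * m * ((j : ℝ) + 1) / n)) hc
  rw [show 2 * π * m / n = 2 * (π * m / n) by ring]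
  refine hsum.congr_deriv ?_
  rw [← sum_mul, sum_add_distrib, hper.sum_range_rotation_succ θ m hn]
  ring

/-- **Melnikov potential on the sphere.** For `ρ₀ ∈ (0, π/2)`, integers `0 < m < n`,
`n ≥ 2`, `gcd(m,n) = 1`, a `2π`-periodic `ρ₁ : ℝ → ℝ` and `θ ∈ ℝ`, set
`θ_j = θ + 2πmj/n`. Then `ℓ(ε) = ∑_{j<n} arccos(sin(ρ₀+ερ₁(θ_j)) sin(ρ₀+ερ₁(θ_{j+1})) cos(2πm/n)
+ cos(ρ₀+ερ₁(θ_j)) cos(ρ₀+ερ₁(θ_{j+1})))` is differentiable at `ε = 0` with derivative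
`(2 sin(2ρ₀) sin²(πm/n)/sin l₀) ∑_{j<n} ρ₁(θ_j)`, `l₀ = arccos(1 − 2 sin²ρ₀ sin²(πm/n))`. -/
theorem spherical_melnikov_derivative (ρ₀ : ℝ) (hρ : ρ₀ ∈ Set.Ioo 0 (π / 2))
    (n : ℕ) (hn : 2 ≤ n) (m : ℤ) (hm : 0 < m) (hmn : m < (n : ℤ))
    (hgcd : Int.gcd m (n : ℤ) = 1)
    (ρ₁ : ℝ → ℝ) (hper : Function.Periodic ρ₁ (2 * π)) (θ : ℝ) :
    HasDerivAt
      (fun ε : ℝ => ∑ j ∈ Finset.range n,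
        arccos (sin (ρ₀ + ε * ρ₁ (θ + 2 * π * m * j / n)) *
            sin (ρ₀ + ε * ρ₁ (θ + 2 * π * m * (j + 1) / n)) * cos (2 * π * m / n) +
          cos (ρ₀ + ε * ρ₁ (θ + 2 * π * m * j / n)) *
            cos (ρ₀ + ε * ρ₁ (θ + 2 * π * m * (j + 1) / n))))
      ((2 * sin (2 * ρ₀) * sin (π * m / n) ^ 2 /
          sin (arccos (1 - 2 * sin ρ₀ ^ 2 * sin (π * m / n) ^ 2))) *
        ∑ j ∈ Finset.range n, ρ₁ (θ + 2 * π * m * j / n))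
      0 :=
  spherical_melnikov_derivative_general ρ₀ hρ n m hm hmn ρ₁ hper θ
end

section
/- Let ρ₀ > 0, let n ≥ 2 and m be integers with 0 < m < n and gcd(m,n) = 1, let ρ₁ : ℝ → ℝ be 2π-periodic, and fix θ ∈ ℝ. Set θ_j = θ + 2πmj/n and define ℓ : ℝ → ℝ by ℓ(ε) = ∑_{j=0}^{n-1} arcosh( cosh(ρ₀+ερ₁(θ_j))·cosh(ρ₀+ερ₁(θ_{j+1})) − sinh(ρ₀+ερ₁(θ_j))·sinh(ρ₀+ερ₁(θ_{j+1}))·cos(2πm/n) ). Then ℓ is differentiable at ε = 0 with derivative ℓ′(0) = ( 2 sinh(2ρ₀) sin²(πm/n) / sinh l₀ ) · ∑_{j=0}^{n-1} ρ₁(θ_j), where l₀ = arcosh(1 + 2 sinh²ρ₀ sin²(πm/n)). -/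
open Real

theorem HasDerivAt.real_arcosh {f : ℝ → ℝ} {f' x : ℝ} (hf : HasDerivAt f f' x)
    (hx : 1 < f x) :
    HasDerivAt (fun y => Real.arcosh (f y)) (f' / Real.sinh (Real.arcosh (f x))) x := by
  have h := (Real.hasDerivAt_arcosh hx).comp x hf
  rwa [← Real.sinh_arcosh hx.le, ← div_eq_inv_mul] at h

theorem Finset.sum_range_comp_succ_eq_of_eq {M : Type*} [AddCancelCommMonoid M] {f : ℕ → M}
    {n : ℕ} (h : f n = f 0) : ∑ j ∈ range n, f (j + 1) = ∑ j ∈ range n, f j := by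
  have h' := Finset.sum_range_succ' f n
  rw [Finset.sum_range_succ, h] at h'
  exact (add_right_cancel h').symm

theorem cosh_mul_cosh_sub_sinh_mul_sinh_mul (ρ c : ℝ) :
    cosh ρ * cosh ρ - sinh ρ * sinh ρ * c = 1 + sinh ρ ^ 2 * (1 - c) := by
  linear_combination Real.cosh_sq_sub_sinh_sq ρ

theorem hasDerivAt_arcosh_chord {ρ c : ℝ} (a b : ℝ) (hc : 0 < sinh ρ ^ 2 * (1 - c)) :
    HasDerivAt
      (fun ε => Real.arcosh (cosh (ρ + ε * a) * cosh (ρ + ε * b) -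
        sinh (ρ + ε * a) * sinh (ρ + ε * b) * c))
      ((a + b) * (sinh ρ * cosh ρ * (1 - c) / sinh (Real.arcosh (1 + sinh ρ ^ 2 * (1 - c)))))
      0 := by
  have hline (u : ℝ) : HasDerivAt (fun ε : ℝ => ρ + ε * u) u 0 :=
    (hasDerivAt_mul_const u).const_add ρ
  have hg : HasDerivAt
      (fun ε => cosh (ρ + ε * a) * cosh (ρ + ε * b) - sinh (ρ + ε * a) * sinh (ρ + ε * b) * c)
      ((a + b) * (sinh ρ * cosh ρ * (1 - c))) 0 := by
    have h := ((hline a).cosh.fun_mul (hline b).cosh).fun_sub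
      (((hline a).sinh.fun_mul (hline b).sinh).mul_const c)
    simp only [zero_mul, add_zero] at h
    exact h.congr_deriv (by ring)
  have hchord := hg.real_arcosh (by
    simp only [zero_mul, add_zero, cosh_mul_cosh_sub_sinh_mul_sinh_mul]
    linarith)
  simp only [zero_mul, add_zero, cosh_mul_cosh_sub_sinh_mul_sinh_mul] at hchord
  rwa [mul_div_assoc] at hchord

theorem hyperbolic_melnikov_derivative_general (ρ₀ : ℝ) (hρ : 0 < ρ₀)
    (n : ℕ) (m : ℤ) (hm : 0 < m) (hmn : m < (n : ℤ))
    (ρ₁ : ℝ → ℝ) (hper : Function.Periodic ρ₁ (2 * π)) (θ : ℝ) :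
    HasDerivAt
      (fun ε : ℝ => ∑ j ∈ Finset.range n,
        _root_.arcosh (cosh (ρ₀ + ε * ρ₁ (θ + 2 * π * m * j / n)) *
            cosh (ρ₀ + ε * ρ₁ (θ + 2 * π * m * (j + 1) / n)) -
          sinh (ρ₀ + ε * ρ₁ (θ + 2 * π * m * j / n)) *
            sinh (ρ₀ + ε * ρ₁ (θ + 2 * π * m * (j + 1) / n)) * cos (2 * π * m / n)))
      ((2 * sinh (2 * ρ₀) * sin (π * m / n) ^ 2 /
          sinh (_root_.arcosh (1 + 2 * sinh ρ₀ ^ 2 * sin (π * m / n) ^ 2))) *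
        ∑ j ∈ Finset.range n, ρ₁ (θ + 2 * π * m * j / n))
      0 := by
  have hm' : (0 : ℝ) < m := by exact_mod_cast hm
  have hmn' : (m : ℝ) < n := by exact_mod_cast hmn
  have hn : (0 : ℝ) < n := hm'.trans hmn'
  have hsin : 0 < sin (π * m / n) :=
    sin_pos_of_pos_of_lt_pi (by positivity) (by rw [div_lt_iff₀ hn]; gcongr)
  have hcos : 1 - cos (2 * π * m / n) = 2 * sin (π * m / n) ^ 2 := by
    rw [show 2 * π * m / n = 2 * (π * m / n) by ring, cos_two_mul_eq_one_sub]; ring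
  have hpos : 0 < sinh ρ₀ ^ 2 * (1 - cos (2 * π * m / n)) := by
    have := sinh_pos_iff.mpr hρ
    rw [hcos]; positivity
  set r : ℕ → ℝ := fun j => ρ₁ (θ + 2 * π * m * j / n)
  have hr : r n = r 0 := by
    simp only [r, Nat.cast_zero, mul_zero, zero_div, add_zero]
    convert hper.int_mul m θ using 2
    field_simp
  have hsum := HasDerivAt.fun_sum (u := Finset.range n) fun j _ =>
    hasDerivAt_arcosh_chord (r j) (r (j + 1)) hpos
  have hderiv : ∑ j ∈ Finset.range n, (r j + r (j + 1)) *
      (sinh ρ₀ * cosh ρ₀ * (1 - cos (2 * π * m / n)) /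
        sinh (Real.arcosh (1 + sinh ρ₀ ^ 2 * (1 - cos (2 * π * m / n))))) =
      2 * sinh (2 * ρ₀) * sin (π * m / n) ^ 2 /
        sinh (Real.arcosh (1 + 2 * sinh ρ₀ ^ 2 * sin (π * m / n) ^ 2)) * ∑ j ∈ Finset.range n, r j := by
    rw [← Finset.sum_mul, Finset.sum_add_distrib, Finset.sum_range_comp_succ_eq_of_eq hr, hcos,
      sinh_two_mul]
    ring_nf
  rw [hderiv] at hsum
  simpa only [r, Nat.cast_add, Nat.cast_one, ← arcosh_eq_real_arcosh] using hsum

/-- **Melnikov potential on the hyperbolic plane.** For `ρ₀ > 0`, integers `0 < m < n`,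
`n ≥ 2`, `gcd(m,n) = 1`, a `2π`-periodic `ρ₁ : ℝ → ℝ` and `θ ∈ ℝ`, set `θ_j = θ + 2πmj/n`.
Then `ℓ(ε) = ∑_{j<n} arcosh(cosh(ρ₀+ερ₁(θ_j)) cosh(ρ₀+ερ₁(θ_{j+1}))
− sinh(ρ₀+ερ₁(θ_j)) sinh(ρ₀+ερ₁(θ_{j+1})) cos(2πm/n))` is differentiable at `ε = 0` with
derivative `(2 sinh(2ρ₀) sin²(πm/n)/sinh l₀) ∑_{j<n} ρ₁(θ_j)`, where
`l₀ = arcosh(1 + 2 sinh²ρ₀ sin²(πm/n))`. -/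
theorem hyperbolic_melnikov_derivative (ρ₀ : ℝ) (hρ : 0 < ρ₀)
    (n : ℕ) (hn : 2 ≤ n) (m : ℤ) (hm : 0 < m) (hmn : m < (n : ℤ))
    (hgcd : Int.gcd m (n : ℤ) = 1)
    (ρ₁ : ℝ → ℝ) (hper : Function.Periodic ρ₁ (2 * π)) (θ : ℝ) :
    HasDerivAt
      (fun ε : ℝ => ∑ j ∈ Finset.range n,
        _root_.arcosh (cosh (ρ₀ + ε * ρ₁ (θ + 2 * π * m * j / n)) *
            cosh (ρ₀ + ε * ρ₁ (θ + 2 * π * m * (j + 1) / n)) -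
          sinh (ρ₀ + ε * ρ₁ (θ + 2 * π * m * j / n)) *
            sinh (ρ₀ + ε * ρ₁ (θ + 2 * π * m * (j + 1) / n)) * cos (2 * π * m / n)))
      ((2 * sinh (2 * ρ₀) * sin (π * m / n) ^ 2 /
          sinh (_root_.arcosh (1 + 2 * sinh ρ₀ ^ 2 * sin (π * m / n) ^ 2))) *
        ∑ j ∈ Finset.range n, ρ₁ (θ + 2 * π * m * j / n))
      0 :=
  hyperbolic_melnikov_derivative_general ρ₀ hρ n m hm hmn ρ₁ hper θ
end

section
/- Let ρ₀ > 0, let n ≥ 2 and m be integers with 0 < m < n and gcd(m,n) = 1, let ρ₁ : ℝ → ℝ be 2π-periodic, and fix θ ∈ ℝ. Set θ_j = θ + 2πmj/n and define ℓ : ℝ → ℝ by ℓ(ε) = ∑_{j=0}^{n-1} √( (ρ₀+ερ₁(θ_j))² + (ρ₀+ερ₁(θ_{j+1}))² − 2(ρ₀+ερ₁(θ_j))(ρ₀+ερ₁(θ_{j+1}))·cos(2πm/n) ). Then ℓ is differentiable at ε = 0 with derivative ℓ′(0) = ( 4ρ₀ sin²(πm/n) / l₀ ) · ∑_{j=0}^{n-1}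 ρ₁(θ_j), where l₀ = 2ρ₀·sin(πm/n). -/
/-!
Each summand is the length of a chord of the circle of radius `ρ₀` subtending the angle
`2πm/n`, hence equals `2ρ₀ sin(πm/n) > 0` at `ε = 0`; differentiating the law of cosines there
gives `sin(πm/n) (ρ₁(θ_j) + ρ₁(θ_{j+1}))`. Since `θ_n = θ_0 + 2πm`, periodicity closes the orbit,
so the shifted sum `∑ ρ₁(θ_{j+1})` equals `∑ ρ₁(θ_j)` and the derivative is
`2 sin(πm/n) ∑ ρ₁(θ_j) = (4ρ₀ sin²(πm/n) / l₀) ∑ ρ₁(θ_j)`.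
-/

open Real Finset

theorem Finset.sum_range_shift_of_apply_eq {M : Type*} [AddCancelCommMonoid M] {f : ℕ → M}
    {n : ℕ} (hf : f n = f 0) : ∑ j ∈ range n, f (j + 1) = ∑ j ∈ range n, f j := by
  apply add_right_cancel (b := f n)
  nth_rewrite 1 [hf]
  rw [← sum_range_succ', sum_range_succ]

theorem hasDerivAt_chord_length {ρ₀ : ℝ} (x y φ : ℝ) (hρ : 0 < ρ₀) (hφ : 0 < sin (φ / 2)) :
    HasDerivAt (fun ε : ℝ => √((ρ₀ + ε * x) ^ 2 + (ρ₀ + ε * y) ^ 2 -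
      2 * (ρ₀ + ε * x) * (ρ₀ + ε * y) * cos φ)) (sin (φ / 2) * (x + y)) 0 := by
  set s := sin (φ / 2)
  have hcos : cos φ = 1 - 2 * s ^ 2 := by
    rw [sin_sq_eq_half_sub, mul_div_cancel₀ φ two_ne_zero]; ring
  have hradius (z : ℝ) : HasDerivAt (fun ε : ℝ => ρ₀ + ε * z) z 0 := by
    simpa using ((hasDerivAt_id (0 : ℝ)).mul_const z).const_add ρ₀
  have hsq : HasDerivAt (fun ε : ℝ => (ρ₀ + ε * x) ^ 2 + (ρ₀ + ε * y) ^ 2 -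
      2 * (ρ₀ + ε * x) * (ρ₀ + ε * y) * cos φ) (4 * ρ₀ * s ^ 2 * (x + y)) 0 := by
    refine ((((hradius x).fun_pow 2).fun_add ((hradius y).fun_pow 2)).fun_sub
      ((((hradius x).const_mul 2).fun_mul (hradius y)).mul_const (cos φ))).congr_deriv ?_
    rw [hcos]; push_cast; ring
  have hchord : (ρ₀ + 0 * x) ^ 2 + (ρ₀ + 0 * y) ^ 2 - 2 * (ρ₀ + 0 * x) * (ρ₀ + 0 * y) * cos φ
      = (2 * ρ₀ * s) ^ 2 := by
    rw [hcos]; ring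
  convert hsq.sqrt (by rw [hchord]; positivity) using 1
  rw [hchord, sqrt_sq (by positivity)]
  field_simp
  ring

theorem euclidean_melnikov_derivative_general (ρ₀ : ℝ) (hρ : 0 < ρ₀)
    (n : ℕ) (m : ℤ) (hm : 0 < m) (hmn : m < (n : ℤ))
    (ρ₁ : ℝ → ℝ) (hper : Function.Periodic ρ₁ (2 * π)) (θ : ℝ) :
    HasDerivAt
      (fun ε : ℝ => ∑ j ∈ Finset.range n,
        Real.sqrt ((ρ₀ + ε * ρ₁ (θ + 2 * π * m * j / n)) ^ 2 +
          (ρ₀ + ε * ρ₁ (θ + 2 * π * m * (j + 1) / n)) ^ 2 -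
          2 * (ρ₀ + ε * ρ₁ (θ + 2 * π * m * j / n)) *
            (ρ₀ + ε * ρ₁ (θ + 2 * π * m * (j + 1) / n)) * cos (2 * π * m / n)))
      ((4 * ρ₀ * sin (π * m / n) ^ 2 / (2 * ρ₀ * sin (π * m / n))) *
        ∑ j ∈ Finset.range n, ρ₁ (θ + 2 * π * m * j / n))
      0 := by
  have hn : (0 : ℝ) < n := by exact_mod_cast hm.trans hmn
  have hhalf : 2 * π * m / n / 2 = π * m / n := by ring
  have hs : 0 < sin (π * m / n) := by
    refine sin_pos_of_pos_of_lt_pi (by positivity) ?_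
    rw [div_lt_iff₀ hn]
    exact mul_lt_mul_of_pos_left (by exact_mod_cast hmn : (m : ℝ) < n) pi_pos
  set X : ℕ → ℝ := fun j => ρ₁ (θ + 2 * π * m * j / n)
  have hterm (j : ℕ) := hasDerivAt_chord_length (X j) (X (j + 1)) (2 * π * m / n) hρ
    (by rwa [hhalf])
  have hclosed : X n = X 0 := by
    have hturn : 2 * π * m * (n : ℕ) / n = m * (2 * π) := by field_simp
    simpa [X, hturn] using (hper.int_mul m) θ
  simp_rw [← Nat.cast_succ]
  refine (HasDerivAt.fun_sum fun j _ => hterm j).congr_deriv ?_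
  rw [hhalf, ← mul_sum, sum_add_distrib, sum_range_shift_of_apply_eq hclosed]
  field_simp
  ring

/-- **Planar Melnikov potential (Ramírez-Ros).** For `ρ₀ > 0`, integers `0 < m < n`,
`n ≥ 2`, `gcd(m,n) = 1`, a `2π`-periodic `ρ₁ : ℝ → ℝ` and `θ ∈ ℝ`, set `θ_j = θ + 2πmj/n`.
Then `ℓ(ε) = ∑_{j<n} √((ρ₀+ερ₁(θ_j))² + (ρ₀+ερ₁(θ_{j+1}))²
− 2(ρ₀+ερ₁(θ_j))(ρ₀+ερ₁(θ_{j+1})) cos(2πm/n))` is differentiable at `ε = 0` with derivative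
`(4ρ₀ sin²(πm/n)/l₀) ∑_{j<n} ρ₁(θ_j)`, where `l₀ = 2ρ₀ sin(πm/n)`. -/
theorem euclidean_melnikov_derivative (ρ₀ : ℝ) (hρ : 0 < ρ₀)
    (n : ℕ) (hn : 2 ≤ n) (m : ℤ) (hm : 0 < m) (hmn : m < (n : ℤ))
    (hgcd : Int.gcd m (n : ℤ) = 1)
    (ρ₁ : ℝ → ℝ) (hper : Function.Periodic ρ₁ (2 * π)) (θ : ℝ) :
    HasDerivAt
      (fun ε : ℝ => ∑ j ∈ Finset.range n,
        Real.sqrt ((ρ₀ + ε * ρ₁ (θ + 2 * π * m * j / n)) ^ 2 +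
          (ρ₀ + ε * ρ₁ (θ + 2 * π * m * (j + 1) / n)) ^ 2 -
          2 * (ρ₀ + ε * ρ₁ (θ + 2 * π * m * j / n)) *
            (ρ₀ + ε * ρ₁ (θ + 2 * π * m * (j + 1) / n)) * cos (2 * π * m / n)))
      ((4 * ρ₀ * sin (π * m / n) ^ 2 / (2 * ρ₀ * sin (π * m / n))) *
        ∑ j ∈ Finset.range n, ρ₁ (θ + 2 * π * m * j / n))
      0 :=
  euclidean_melnikov_derivative_general ρ₀ hρ n m hm hmn ρ₁ hper θ
end

section
/- Let ρ₀ ∈ (0, π/2). For ψ ∈ (0, π/2), the quantity (cos²ρ₀ − tan²ψ)/(sec²ψ − sin²ρ₀) equals (cos²ρ₀ − tan²ψ)/(cos²ρ₀ + tan²ψ) and lies in the open interval (−1, 1); the function α(ψ) = arccos( (cos²ρ₀ − tan²ψ)/(sec²ψ − sin²ρ₀) ) is strictly increasing on (0, π/2) and maps (0, π/2) bijectively onto (0, π). In particular, for all integers 0 < m < n with 2m < n there exists a unique ψ^{m/n} ∈ (0, π/2) with α(ψ^{m/n}) = 2πm/n. -/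
/-!
On `(0, π/2)` the denominator `sec²ψ − sin²ρ₀` equals `cos²ρ₀ + tan²ψ`, and with `s = tan ψ / cos ρ₀`
the argument of `arccos` becomes `(1 − s²)/(1 + s²) = cos (2 arctan s)`. Hence
`α ψ = 2 arctan (tan ψ / cos ρ₀)`, a composition of increasing bijections
`(0, π/2) → (0, ∞) → (0, ∞) → (0, π/2) → (0, π)`.
-/

open Real Set

theorem one_div_cos_sq_sub_sin_sq {ψ : ℝ} (hψ : cos ψ ≠ 0) (ρ : ℝ) :
    1 / cos ψ ^ 2 - sin ρ ^ 2 = cos ρ ^ 2 + tan ψ ^ 2 := by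
  rw [tan_eq_sin_div_cos]
  field_simp
  linear_combination -cos ψ ^ 2 * sin_sq_add_cos_sq ρ - sin_sq_add_cos_sq ψ

theorem sub_div_add_mem_Ioo {a b : ℝ} (ha : 0 < a) (hb : 0 < b) :
    (a - b) / (a + b) ∈ Ioo (-1 : ℝ) 1 := by
  have hab : 0 < a + b := by positivity
  constructor
  · rw [lt_div_iff₀ hab]; linarith
  · rw [div_lt_one hab]; linarith

theorem cos_two_mul_arctan (x : ℝ) : cos (2 * arctan x) = (1 - x ^ 2) / (1 + x ^ 2) := by
  rw [cos_two_mul, cos_sq_arctan]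
  field_simp
  ring

theorem arccos_sq_sub_sq_div_sq_add_sq {c t : ℝ} (hc : 0 < c) (ht : 0 ≤ t) :
    arccos ((c ^ 2 - t ^ 2) / (c ^ 2 + t ^ 2)) = 2 * arctan (t / c) := by
  have hratio : (c ^ 2 - t ^ 2) / (c ^ 2 + t ^ 2) = (1 - (t / c) ^ 2) / (1 + (t / c) ^ 2) := by
    field_simp
  rw [hratio, ← cos_two_mul_arctan, arccos_cos]
  · have : 0 ≤ arctan (t / c) := arctan_nonneg.2 (by positivity)
    positivity
  · linarith [arctan_lt_pi_div_two (t / c)]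

theorem strictMonoOn_two_mul_arctan_tan_div {c : ℝ} (hc : 0 < c) :
    StrictMonoOn (fun ψ ↦ 2 * arctan (tan ψ / c)) (Ioo 0 (π / 2)) := by
  intro x hx y hy hxy
  have htan : tan x < tan y :=
    strictMonoOn_tan ⟨by linarith [hx.1, pi_pos], hx.2⟩ ⟨by linarith [hy.1, pi_pos], hy.2⟩ hxy
  have := arctan_strictMono (div_lt_div_of_pos_right htan hc)
  dsimp only
  linarith

theorem bijOn_two_mul_arctan_tan_div {c : ℝ} (hc : 0 < c) :
    BijOn (fun ψ ↦ 2 * arctan (tan ψ / c)) (Ioo 0 (π / 2)) (Ioo 0 π) := by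
  refine ⟨fun ψ hψ ↦ ?_, (strictMonoOn_two_mul_arctan_tan_div hc).injOn, fun y hy ↦ ?_⟩
  · have : 0 < arctan (tan ψ / c) :=
      arctan_pos.2 (div_pos (tan_pos_of_pos_of_lt_pi_div_two hψ.1 hψ.2) hc)
    constructor <;> linarith [arctan_lt_pi_div_two (tan ψ / c)]
  · have hy2 : y / 2 ∈ Ioo 0 (π / 2) := ⟨by linarith [hy.1], by linarith [hy.2]⟩
    have hpos : 0 < c * tan (y / 2) := mul_pos hc (tan_pos_of_pos_of_lt_pi_div_two hy2.1 hy2.2)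
    refine ⟨arctan (c * tan (y / 2)), ⟨arctan_pos.2 hpos, arctan_lt_pi_div_two _⟩, ?_⟩
    dsimp only
    rw [tan_arctan, mul_div_cancel_left₀ _ hc.ne', arctan_tan (by linarith [hy2.1, pi_pos]) hy2.2]
    ring

theorem Set.BijOn.existsUnique_mem_and_eq {α β : Type*} {f : α → β} {s : Set α} {t : Set β}
    (hf : BijOn f s t) {y : β} (hy : y ∈ t) : ∃! x, x ∈ s ∧ f x = y := by
  obtain ⟨x, hx, rfl⟩ := hf.surjOn hy
  exact ⟨x, ⟨hx, rfl⟩, fun z ⟨hz, hfz⟩ ↦ hf.injOn hz hx hfz⟩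

theorem two_mul_pi_mul_div_mem_Ioo {m n : ℤ} (hm : 0 < m) (hmn : 2 * m < n) :
    2 * π * m / n ∈ Ioo 0 π := by
  have hm' : (0 : ℝ) < m := by exact_mod_cast hm
  have hmn' : 2 * (m : ℝ) < n := by exact_mod_cast hmn
  have hn : (0 : ℝ) < n := by linarith
  refine ⟨by positivity, ?_⟩
  rw [div_lt_iff₀ hn]
  nlinarith [pi_pos]

/-- **Twist property of the spherical circular billiard.** For `ρ₀ ∈ (0, π/2)` and
`ψ ∈ (0, π/2)`: `(cos²ρ₀ − tan²ψ)/(sec²ψ − sin²ρ₀) = (cos²ρ₀ − tan²ψ)/(cos²ρ₀ + tan²ψ)`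
lies in `(−1, 1)`; the polar-angle advance `α(ψ) = arccos((cos²ρ₀ − tan²ψ)/(sec²ψ − sin²ρ₀))`
is strictly increasing on `(0, π/2)` and maps it bijectively onto `(0, π)`; and for all
integers `0 < m < n` with `2m < n` there is a unique `ψ^{m/n} ∈ (0, π/2)` with
`α(ψ^{m/n}) = 2πm/n`. -/
theorem spherical_twist (ρ₀ : ℝ) (hρ : ρ₀ ∈ Set.Ioo 0 (π / 2))
    (α : ℝ → ℝ)
    (hα : ∀ ψ : ℝ, α ψ =
      arccos ((cos ρ₀ ^ 2 - tan ψ ^ 2) / (1 / cos ψ ^ 2 - sin ρ₀ ^ 2))) :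
    (∀ ψ ∈ Set.Ioo 0 (π / 2),
      (cos ρ₀ ^ 2 - tan ψ ^ 2) / (1 / cos ψ ^ 2 - sin ρ₀ ^ 2) =
        (cos ρ₀ ^ 2 - tan ψ ^ 2) / (cos ρ₀ ^ 2 + tan ψ ^ 2) ∧
      (cos ρ₀ ^ 2 - tan ψ ^ 2) / (1 / cos ψ ^ 2 - sin ρ₀ ^ 2) ∈ Set.Ioo (-1 : ℝ) 1) ∧
    StrictMonoOn α (Set.Ioo 0 (π / 2)) ∧
    Set.BijOn α (Set.Ioo 0 (π / 2)) (Set.Ioo 0 π) ∧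
    ∀ m n : ℤ, 0 < m → m < n → 2 * m < n →
      ∃! ψ : ℝ, ψ ∈ Set.Ioo 0 (π / 2) ∧ α ψ = 2 * π * m / n := by
  have hc : 0 < cos ρ₀ := cos_pos_of_mem_Ioo ⟨by linarith [hρ.1, pi_pos], hρ.2⟩
  have hden : ∀ ψ ∈ Ioo 0 (π / 2), 1 / cos ψ ^ 2 - sin ρ₀ ^ 2 = cos ρ₀ ^ 2 + tan ψ ^ 2 :=
    fun ψ hψ ↦ one_div_cos_sq_sub_sin_sq
      (cos_pos_of_mem_Ioo ⟨by linarith [hψ.1, pi_pos], hψ.2⟩).ne' ρ₀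
  have htan : ∀ ψ ∈ Ioo 0 (π / 2), 0 < tan ψ := fun ψ hψ ↦
    tan_pos_of_pos_of_lt_pi_div_two hψ.1 hψ.2
  have hα' : EqOn (fun ψ ↦ 2 * arctan (tan ψ / cos ρ₀)) α (Ioo 0 (π / 2)) := fun ψ hψ ↦ by
    rw [hα, hden ψ hψ, arccos_sq_sub_sq_div_sq_add_sq hc (htan ψ hψ).le]
  have hbij := (bijOn_two_mul_arctan_tan_div hc).congr hα'
  refine ⟨fun ψ hψ ↦ ?_, (strictMonoOn_two_mul_arctan_tan_div hc).congr hα', hbij,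
    fun m n hm _ h2mn ↦ hbij.existsUnique_mem_and_eq (two_mul_pi_mul_div_mem_Ioo hm h2mn)⟩
  rw [hden ψ hψ]
  exact ⟨rfl, sub_div_add_mem_Ioo (by positivity) (pow_pos (htan ψ hψ) 2)⟩
end
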